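/- Let D be the open unit disc in ℂ, let φ : D → ℝ^K be twice continuously differentiable and harmonic (Δφ = ∂²φ/∂x² + ∂²φ/∂y² = 0 componentwise), and let Ψ = (Ψ¹, …, Ψ^K) : D → (ℂ²)^K be continuously differentiable with ∂̸Ψ^k = 0 on D for every k, where ∂̸ is the flat Dirac operator applied to each ℂ²-valued component. Define T : D → ℂ by T(z) = (|φ_x|² − |φ_y|² − 2i⟨φ_x, φ_y⟩) + Σ_k ( ⟨Ψ^k, e₁·∂_xΨ^k⟩ − i⟨Ψ^k, e₁·∂_yΨ^k⟩ ), where φ_x, φ_y are the partial derivatives of φ, ⟨φ_x, φ_y⟩ is the Euclidean inner product on ℝ^K, and ⟨·,·⟩ on ℂ² is the Hermitian inner product. Then T is holomorphic on D. -/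

import Mathlib

open Metric

/-- Clifford multiplication by `e₁ = [[0,1],[-1,0]]` on a flat spinor in `ℂ²`. -/
def e1mul (v : ℂ × ℂ) : ℂ × ℂ := (v.2, -v.1)

/-- Clifford multiplication by `e₂ = [[0,i],[i,0]]` on a flat spinor in `ℂ²`. -/
def e2mul (v : ℂ × ℂ) : ℂ × ℂ := (Complex.I * v.2, Complex.I * v.1)

/-- The Hermitian inner product on `ℂ²`. -/
def hermInner (u v : ℂ × ℂ) : ℂ :=
  starRingEnd ℂ u.1 * v.1 + starRingEnd ℂ u.2 * v.2

/-- The open unit disc in `ℂ`. -/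
noncomputable def unitDisc : Set ℂ := ball (0 : ℂ) 1

lemma cr_hasDerivAt {f : ℂ → ℂ} {L : ℂ →L[ℝ] ℂ} {z : ℂ}
    (h : HasFDerivAt f L z) (hCR : L Complex.I = Complex.I * L 1) :
    HasDerivAt f (L 1) z := by
  have hrs : (ContinuousLinearMap.smulRight (1 : ℂ →L[ℂ] ℂ) (L 1)).restrictScalars ℝ = L := by
    ext w
    have hw : w = w.re • (1 : ℂ) + w.im • Complex.I := by
      simp [Complex.real_smul, Complex.re_add_im]
    have h2 : L w = w.re • L 1 + w.im • L Complex.I := by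
      conv_lhs => rw [hw]
      rw [map_add, map_smul, map_smul]
    simp only [ContinuousLinearMap.coe_restrictScalars', h2, hCR,
      ContinuousLinearMap.smulRight_apply, ContinuousLinearMap.one_apply, smul_eq_mul]
    nth_rewrite 1 [hw]
    push_cast [Complex.real_smul]
    ring
  have := hasFDerivAt_of_restrictScalars ℝ h hrs
  simpa using this.hasDerivAt

lemma spinor_aux {Φ : ℂ → ℂ × ℂ} (hΦ : ContDiffOn ℝ 1 Φ unitDisc)
    (hd : ∀ z ∈ unitDisc,
      e1mul (fderivWithin ℝ Φ unitDisc z 1) + e2mul (fderivWithin ℝ Φ unitDisc z Complex.I) = 0) :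
    DifferentiableOn ℂ (fun z => starRingEnd ℂ (Φ z).1) unitDisc ∧
    DifferentiableOn ℂ (fun z => (Φ z).2) unitDisc ∧
    ∀ z ∈ unitDisc, deriv (fun w => (Φ w).2) z = (fderivWithin ℝ Φ unitDisc z 1).2 ∧
      (fderivWithin ℝ Φ unitDisc z 1).1 = Complex.I * (fderivWithin ℝ Φ unitDisc z Complex.I).1 ∧
      (fderivWithin ℝ Φ unitDisc z 1).2 = -(Complex.I * (fderivWithin ℝ Φ unitDisc z Complex.I).2) := by
  have hU : IsOpen unitDisc := isOpen_ball
  have hdiff : DifferentiableOn ℝ Φ unitDisc := hΦ.differentiableOn one_ne_zero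
  have key : ∀ z ∈ unitDisc,
      HasFDerivAt Φ (fderivWithin ℝ Φ unitDisc z) z ∧
      (fderivWithin ℝ Φ unitDisc z 1).1 = Complex.I * (fderivWithin ℝ Φ unitDisc z Complex.I).1 ∧
      (fderivWithin ℝ Φ unitDisc z 1).2 = -(Complex.I * (fderivWithin ℝ Φ unitDisc z Complex.I).2) := by
    intro z hz
    have hat : HasFDerivAt Φ (fderivWithin ℝ Φ unitDisc z) z := by
      rw [fderivWithin_of_isOpen hU hz]
      exact ((hdiff z hz).differentiableAt (hU.mem_nhds hz)).hasFDerivAt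
    have h0 := hd z hz
    simp only [e1mul, e2mul, Prod.ext_iff, Prod.fst_add, Prod.snd_add, Prod.fst_zero,
      Prod.snd_zero] at h0
    obtain ⟨h1, h2⟩ := h0
    refine ⟨hat, ?_, ?_⟩
    · linear_combination -h2
    · linear_combination h1
  have hg : ∀ z ∈ unitDisc, HasDerivAt (fun w => (Φ w).2) ((fderivWithin ℝ Φ unitDisc z 1).2) z := by
    intro z hz
    obtain ⟨hat, h1, h2⟩ := key z hz
    have hgf : HasFDerivAt (fun w => (Φ w).2)
        ((ContinuousLinearMap.snd ℝ ℂ ℂ).comp (fderivWithin ℝ Φ unitDisc z)) z :=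
      (ContinuousLinearMap.snd ℝ ℂ ℂ).hasFDerivAt.comp z hat
    have hcr : ((ContinuousLinearMap.snd ℝ ℂ ℂ).comp (fderivWithin ℝ Φ unitDisc z)) Complex.I =
        Complex.I * ((ContinuousLinearMap.snd ℝ ℂ ℂ).comp (fderivWithin ℝ Φ unitDisc z)) 1 := by
      simp only [ContinuousLinearMap.coe_comp', Function.comp_apply,
        ContinuousLinearMap.coe_snd']
      rw [h2]; ring_nf; simp [Complex.I_sq]
    simpa using cr_hasDerivAt hgf hcr
  have hF : ∀ z ∈ unitDisc, DifferentiableAt ℂ (fun w => starRingEnd ℂ (Φ w).1) z := by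
    intro z hz
    obtain ⟨hat, h1, h2⟩ := key z hz
    have hff : HasFDerivAt (fun w => starRingEnd ℂ (Φ w).1)
        ((Complex.conjCLE.toContinuousLinearMap).comp
          ((ContinuousLinearMap.fst ℝ ℂ ℂ).comp (fderivWithin ℝ Φ unitDisc z))) z := by
      exact (Complex.conjCLE.toContinuousLinearMap.hasFDerivAt.comp z
        ((ContinuousLinearMap.fst ℝ ℂ ℂ).hasFDerivAt.comp z hat))
    have hcr : ((Complex.conjCLE.toContinuousLinearMap).comp
          ((ContinuousLinearMap.fst ℝ ℂ ℂ).comp (fderivWithin ℝ Φ unitDisc z))) Complex.I =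
        Complex.I * ((Complex.conjCLE.toContinuousLinearMap).comp
          ((ContinuousLinearMap.fst ℝ ℂ ℂ).comp (fderivWithin ℝ Φ unitDisc z))) 1 := by
      simp only [ContinuousLinearMap.coe_comp', Function.comp_apply,
        ContinuousLinearMap.coe_fst', ContinuousLinearEquiv.coe_coe, Complex.conjCLE_apply]
      rw [h1, map_mul]
      simp only [Complex.conj_I]
      ring_nf
      simp [Complex.I_sq]
    exact (cr_hasDerivAt hff hcr).differentiableAt
  refine ⟨fun z hz => (hF z hz).differentiableWithinAt,
    fun z hz => ((hg z hz).differentiableAt).differentiableWithinAt, fun z hz => ?_⟩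
  obtain ⟨_, h1, h2⟩ := key z hz
  exact ⟨(hg z hz).deriv, h1, h2⟩

lemma phi_aux {K : ℕ} {φ : ℂ → EuclideanSpace ℝ (Fin K)}
    (hφ : ContDiffOn ℝ 2 φ unitDisc)
    (hharm : ∀ z ∈ unitDisc,
      fderivWithin ℝ (fun w => fderivWithin ℝ φ unitDisc w 1) unitDisc z 1 +
        fderivWithin ℝ (fun w => fderivWithin ℝ φ unitDisc w Complex.I) unitDisc z Complex.I
        = 0) (k : Fin K) :
    DifferentiableOn ℂ (fun z =>
      (((fderivWithin ℝ φ unitDisc z 1) k : ℝ) : ℂ) -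
        Complex.I * (((fderivWithin ℝ φ unitDisc z Complex.I) k : ℝ) : ℂ)) unitDisc := by
  have hU : IsOpen unitDisc := isOpen_ball
  have hD : UniqueDiffOn ℝ unitDisc := hU.uniqueDiffOn
  set P : ℂ → (ℂ →L[ℝ] EuclideanSpace ℝ (Fin K)) := fun w => fderivWithin ℝ φ unitDisc w with hPdef
  have hP : ContDiffOn ℝ 1 P unitDisc := ContDiffOn.fderivWithin (m := 1) hφ hD (by norm_num)
  have hPdiff : DifferentiableOn ℝ P unitDisc := hP.differentiableOn one_ne_zero
  intro z hz
  set R : ℂ →L[ℝ] (ℂ →L[ℝ] EuclideanSpace ℝ (Fin K)) := fderivWithin ℝ P unitDisc z with hRdef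
  have hRat : HasFDerivAt P R z := by
    rw [hRdef, fderivWithin_of_isOpen hU hz]
    exact ((hPdiff z hz).differentiableAt (hU.mem_nhds hz)).hasFDerivAt
  have hsymm : ∀ v w : ℂ, R v w = R w v := by
    intro v w
    refine second_derivative_symmetric_of_eventually (f := φ) ?_ hRat v w
    filter_upwards [hU.mem_nhds hz] with y hy
    have := ((hφ.differentiableOn (by norm_num) y hy).differentiableAt (hU.mem_nhds hy))
    have h := this.hasFDerivAt
    rwa [← fderivWithin_of_isOpen hU hy] at h
  have happly : ∀ v : ℂ, fderivWithin ℝ (fun w => P w v) unitDisc z =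
      (ContinuousLinearMap.apply ℝ (EuclideanSpace ℝ (Fin K)) v).comp R := by
    intro v
    have he : (fun w => P w v) = (ContinuousLinearMap.apply ℝ (EuclideanSpace ℝ (Fin K)) v) ∘ P := rfl
    rw [he, fderiv_comp_fderivWithin z
      ((ContinuousLinearMap.apply ℝ (EuclideanSpace ℝ (Fin K)) v).differentiableAt)
      (hPdiff z hz) (hD z hz), ContinuousLinearMap.fderiv]
  have hharm' : R 1 1 + R Complex.I Complex.I = 0 := by
    have := hharm z hz
    rw [happly 1, happly Complex.I] at this
    simpa using this
  have hbase : ∀ v : ℂ, HasFDerivAt (fun w => (((P w v) k : ℝ) : ℂ))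
      (Complex.ofRealCLM.comp ((EuclideanSpace.proj k (𝕜 := ℝ)).comp
        ((ContinuousLinearMap.apply ℝ (EuclideanSpace ℝ (Fin K)) v).comp R))) z := by
    intro v
    exact Complex.ofRealCLM.hasFDerivAt.comp z
      ((EuclideanSpace.proj k (𝕜 := ℝ)).hasFDerivAt.comp z
        ((ContinuousLinearMap.apply ℝ (EuclideanSpace ℝ (Fin K)) v).hasFDerivAt.comp z hRat))
  set M1 := Complex.ofRealCLM.comp ((EuclideanSpace.proj k (𝕜 := ℝ)).comp
        ((ContinuousLinearMap.apply ℝ (EuclideanSpace ℝ (Fin K)) (1:ℂ)).comp R))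
  set MI := Complex.ofRealCLM.comp ((EuclideanSpace.proj k (𝕜 := ℝ)).comp
        ((ContinuousLinearMap.apply ℝ (EuclideanSpace ℝ (Fin K)) (Complex.I)).comp R))
  have hH : HasFDerivAt (fun w =>
      (((P w 1) k : ℝ) : ℂ) - Complex.I * (((P w Complex.I) k : ℝ) : ℂ))
      (M1 - Complex.I • MI) z :=
    (hbase 1).sub ((hbase Complex.I).const_mul Complex.I)
  have hval : ∀ v : ℂ, (M1 - Complex.I • MI) v
      = ((R v 1 k : ℝ) : ℂ) - Complex.I * ((R v Complex.I k : ℝ) : ℂ) := by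
    intro v
    simp [M1, MI, ContinuousLinearMap.smul_apply, ContinuousLinearMap.apply_apply,
      EuclideanSpace.proj, mul_comm]
  have hcr : (M1 - Complex.I • MI) Complex.I = Complex.I * (M1 - Complex.I • MI) 1 := by
    rw [hval, hval]
    have e1 : R Complex.I 1 = R 1 Complex.I := hsymm _ _
    have e2 : R Complex.I Complex.I = -(R 1 1) := eq_neg_of_add_eq_zero_right hharm'
    rw [e1, e2]
    have : ((-(R 1 1)) k : ℝ) = -((R 1 1) k) := rfl
    rw [this]
    push_cast
    ring_nf
    simp [Complex.I_sq]
  exact (cr_hasDerivAt hH hcr).differentiableAt.differentiableWithinAt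

/-- The holomorphic quadratic differential of a Dirac-harmonic map, in the flat setting:
if `φ : D → ℝ^K` is `C²` and harmonic and `Ψ = (Ψ¹,…,Ψ^K) : D → (ℂ²)^K` is `C¹` with
`∂̸Ψ^k = 0` for every `k`, then
`T(z) = (|φ_x|² − |φ_y|² − 2i⟨φ_x,φ_y⟩) + Σ_k (⟨Ψ^k, e₁·∂_xΨ^k⟩ − i⟨Ψ^k, e₁·∂_yΨ^k⟩)`
is holomorphic on the unit disc `D`. -/
theorem quadratic_differential_holomorphic {K : ℕ}
    (φ : ℂ → EuclideanSpace ℝ (Fin K)) (Ψ : ℂ → Fin K → ℂ × ℂ)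
    (hφ : ContDiffOn ℝ 2 φ unitDisc)
    (hΨ : ContDiffOn ℝ 1 Ψ unitDisc)
    (hharm : ∀ z ∈ unitDisc,
      fderivWithin ℝ (fun w => fderivWithin ℝ φ unitDisc w 1) unitDisc z 1 +
        fderivWithin ℝ (fun w => fderivWithin ℝ φ unitDisc w Complex.I) unitDisc z Complex.I
        = 0)
    (hdirac : ∀ (k : Fin K), ∀ z ∈ unitDisc,
      e1mul (fderivWithin ℝ (fun w => Ψ w k) unitDisc z 1) +
        e2mul (fderivWithin ℝ (fun w => Ψ w k) unitDisc z Complex.I) = 0) :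
    DifferentiableOn ℂ (fun z =>
      ((‖fderivWithin ℝ φ unitDisc z 1‖ ^ 2 - ‖fderivWithin ℝ φ unitDisc z Complex.I‖ ^ 2 : ℝ) : ℂ)
        - 2 * Complex.I *
          ((inner ℝ (fderivWithin ℝ φ unitDisc z 1) (fderivWithin ℝ φ unitDisc z Complex.I) : ℝ) : ℂ)
        + ∑ k : Fin K,
            (hermInner (Ψ z k) (e1mul (fderivWithin ℝ (fun w => Ψ w k) unitDisc z 1)) -
              Complex.I *
                hermInner (Ψ z k) (e1mul (fderivWithin ℝ (fun w => Ψ w k) unitDisc z Complex.I))))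
      unitDisc := by
  have hU : IsOpen unitDisc := isOpen_ball
  -- spinor data
  have hΦk : ∀ k : Fin K, ContDiffOn ℝ 1 (fun w => Ψ w k) unitDisc := fun k =>
    (ContinuousLinearMap.proj (R := ℝ) (φ := fun _ : Fin K => ℂ × ℂ) k).contDiff.comp_contDiffOn hΨ
  have hsp := fun k => spinor_aux (hΦk k) (hdirac k)
  -- the holomorphic model function
  set T' : ℂ → ℂ := fun z =>
    (∑ k : Fin K, ((((fderivWithin ℝ φ unitDisc z 1) k : ℝ) : ℂ) -
        Complex.I * (((fderivWithin ℝ φ unitDisc z Complex.I) k : ℝ) : ℂ))^2)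
    + ∑ k : Fin K, 2 * starRingEnd ℂ (Ψ z k).1 * deriv (fun w => (Ψ w k).2) z with hT'
  have hT'diff : DifferentiableOn ℂ T' unitDisc := by
    apply DifferentiableOn.add
    · exact DifferentiableOn.fun_sum fun k _ => (phi_aux hφ hharm k).pow 2
    · refine DifferentiableOn.fun_sum fun k _ => DifferentiableOn.mul ?_ ?_
      · exact (differentiableOn_const 2).mul (hsp k).1
      · exact ((hsp k).2.1.analyticOnNhd hU).deriv.differentiableOn
  refine hT'diff.congr fun z hz => ?_
  have hkfacts := fun k : Fin K => (hsp k).2.2 z hz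
  have hker : ∀ k : Fin K,
      hermInner (Ψ z k) (e1mul (fderivWithin ℝ (fun w => Ψ w k) unitDisc z 1)) -
        Complex.I * hermInner (Ψ z k)
          (e1mul (fderivWithin ℝ (fun w => Ψ w k) unitDisc z Complex.I)) =
      2 * starRingEnd ℂ (Ψ z k).1 * deriv (fun w => (Ψ w k).2) z := by
    intro k
    obtain ⟨hd1, h1, h2⟩ := hkfacts k
    simp only [hermInner, e1mul]
    rw [hd1, h1, h2]
    ring
  have hsq : ∀ (a b : ℝ), ((a:ℂ) - Complex.I*(b:ℂ))^2
      = (a:ℂ)*(a:ℂ) - (b:ℂ)*(b:ℂ) - 2*Complex.I*((a:ℂ)*(b:ℂ)) := by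
    intro a b
    ring_nf
    rw [Complex.I_sq]
    ring
  have hnu : ‖fderivWithin ℝ φ unitDisc z 1‖^2
      = ∑ k : Fin K, (fderivWithin ℝ φ unitDisc z 1) k * (fderivWithin ℝ φ unitDisc z 1) k := by
    rw [← real_inner_self_eq_norm_sq]
    simp only [PiLp.inner_apply, RCLike.inner_apply, conj_trivial]
  have hnv : ‖fderivWithin ℝ φ unitDisc z Complex.I‖^2
      = ∑ k : Fin K, (fderivWithin ℝ φ unitDisc z Complex.I) k *
          (fderivWithin ℝ φ unitDisc z Complex.I) k := by
    rw [← real_inner_self_eq_norm_sq]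
    simp only [PiLp.inner_apply, RCLike.inner_apply, conj_trivial]
  have hin : (inner ℝ (fderivWithin ℝ φ unitDisc z 1) (fderivWithin ℝ φ unitDisc z Complex.I) : ℝ)
      = ∑ k : Fin K, (fderivWithin ℝ φ unitDisc z 1) k *
          (fderivWithin ℝ φ unitDisc z Complex.I) k := by
    simp [PiLp.inner_apply, RCLike.inner_apply, mul_comm]
  have hφpart : ((‖fderivWithin ℝ φ unitDisc z 1‖ ^ 2
        - ‖fderivWithin ℝ φ unitDisc z Complex.I‖ ^ 2 : ℝ) : ℂ)
      - 2 * Complex.I *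
        ((inner ℝ (fderivWithin ℝ φ unitDisc z 1) (fderivWithin ℝ φ unitDisc z Complex.I) : ℝ) : ℂ)
      = ∑ k : Fin K, ((((fderivWithin ℝ φ unitDisc z 1) k : ℝ) : ℂ) -
          Complex.I * (((fderivWithin ℝ φ unitDisc z Complex.I) k : ℝ) : ℂ))^2 := by
    rw [hnu, hnv, hin]
    push_cast
    simp_rw [hsq]
    rw [Finset.sum_sub_distrib, Finset.sum_sub_distrib, ← Finset.mul_sum]
  simp only [hT']
  rw [hφpart]
  congr 1
  exact Finset.sum_congr rfl fun k _ => hker k
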